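/- arXiv:2412.01379 — 5 statements merged into one kernel-verified Lean document; each statement's English description precedes it below -/
import Mathlib

section
/- Let X be a metric space with a discretization system: κ : ℕ → ℕ strictly increasing, φ_n ∈ C(X, ℝ^{κ(n)}), ψ_n ∈ C(φ_n(X), X), P_n = ψ_n ∘ φ_n, with sup_{x∈K} d_X(x, P_n(x)) → 0 for every compact K ⊂ X. Let Y be a Banach space, K ⊂ X compact, and G : K → Y continuous. Then for every ε > 0 there exist positive integers p, q, a continuous map G̃ : ℝ^{κ(q)} → ℝ^p, and a continuous map u : ℝ^p → Y such that sup_{v∈K} ‖G(v) − u(G̃(φ_q(v)))‖_Y < ε. -/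
/-!
On the compact set `K`, the decoder `ψ q` is uniformly continuous on `φ q '' K` and `P q` is
uniformly close to the identity, so points of `K` with close codes are close, and hence (by
uniform continuity of `G`) have close values. Thus `G` is, up to `ε`, a function of the code
`φ q v`; a finite partition of unity on the compact set of codes, subordinate to small balls
around finitely many codes `φ q xᵢ`, gives the weights `G̃`, and `u` takes the corresponding
convex combination of the values `G xᵢ`.
-/

open Set Metric

theorem IsCompact.exists_dist_lt_of_dist_image_lt {X Z : Type*} [PseudoMetricSpace X]
    [PseudoMetricSpace Z] {K : Set X} (hK : IsCompact K) {φ : X → Z} {ψ : Z → X}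
    (hφ : Continuous φ) (hψ : ContinuousOn ψ (φ '' K)) {r t : ℝ}
    (hr : ∀ x ∈ K, dist x (ψ (φ x)) < r) (ht : 0 < t) :
    ∃ s > 0, ∀ v ∈ K, ∀ v' ∈ K, dist (φ v) (φ v') < s → dist v v' < 2 * r + t := by
  obtain ⟨s, hs, hψs⟩ := uniformContinuousOn_iff.mp
    ((hK.image hφ).uniformContinuousOn_of_continuous hψ) t ht
  refine ⟨s, hs, fun v hv v' hv' hvv' => ?_⟩
  have hψvv' := hψs _ (mem_image_of_mem φ hv) _ (mem_image_of_mem φ hv') hvv'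
  calc dist v v' ≤ dist v (ψ (φ v)) + dist (ψ (φ v)) (ψ (φ v')) + dist (ψ (φ v')) v' :=
        dist_triangle4 _ _ _ _
    _ < r + t + r := by gcongr; exacts [hr v hv, dist_comm v' _ ▸ hr v' hv']
    _ = 2 * r + t := by ring

theorem exists_clm_comp_approx_of_dist_lt {X Z Y : Type*} [TopologicalSpace X] [MetricSpace Z]
    [NormedAddCommGroup Y] [NormedSpace ℝ Y] {f : X → Z} (hf : Continuous f) {K : Set X}
    (hK : IsCompact K) (hKne : K.Nonempty) {G : X → Y} {s η : ℝ} (hs : 0 < s)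
    (hG : ∀ v ∈ K, ∀ v' ∈ K, dist (f v) (f v') < s → dist (G v) (G v') < η) :
    ∃ (p : ℕ) (Gt : C(Z, Fin p → ℝ)) (u : (Fin p → ℝ) →L[ℝ] Y),
      0 < p ∧ ∀ v ∈ K, dist (G v) (u (Gt (f v))) < η := by
  obtain ⟨t, htK, htfin, hcover⟩ := finite_cover_balls_of_compact (hK.image hf) hs
  obtain ⟨p, c, rfl⟩ := htfin.fin_embedding
  choose x hxK hfx using fun i => htK (mem_range_self i)
  rw [biUnion_range] at hcover
  obtain ⟨ρ, hρ⟩ := PartitionOfUnity.exists_isSubordinate (hK.image hf).isClosed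
    (fun i => ball (c i) s) (fun _ => isOpen_ball) hcover
  refine ⟨p, ⟨fun z i => ρ i z, continuous_pi fun i => (ρ i).continuous⟩,
    ∑ i, (ContinuousLinearMap.proj (R := ℝ) i).smulRight (G (x i)), ?_, fun v hv => ?_⟩
  · obtain ⟨v, hv⟩ := hKne
    obtain ⟨i, -⟩ := mem_iUnion.mp (hcover (mem_image_of_mem f hv))
    exact i.pos
  · have hu : (∑ i, (ContinuousLinearMap.proj (R := ℝ) i).smulRight (G (x i)))
        (fun i => ρ i (f v)) = ∑ᶠ i, ρ i (f v) • G (x i) := by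
      simp [finsum_eq_sum_of_fintype]
    rw [ContinuousMap.coe_mk, hu, dist_comm, ← mem_ball]
    refine ρ.finsum_smul_mem_convex (g := fun i _ => G (x i)) (mem_image_of_mem f hv)
      (fun i hi => ?_) (convex_ball _ _)
    have hvi : dist (f v) (f (x i)) < s := hfx i ▸ mem_ball.mp (hρ i (subset_tsupport _ hi))
    exact mem_ball'.mpr (hG v hv (x i) (hxK i) hvi)

theorem stmt_2_general {X : Type*} [MetricSpace X] {Y : Type*} [NormedAddCommGroup Y]
    [NormedSpace ℝ Y]
    (κ : ℕ → ℕ)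
    (φ : ∀ n : ℕ, X → (Fin (κ n) → ℝ))
    (ψ : ∀ n : ℕ, (Fin (κ n) → ℝ) → X)
    (hφ : ∀ n, Continuous (φ n))
    (hψ : ∀ n, ContinuousOn (ψ n) (Set.range (φ n)))
    (hP : ∀ K : Set X, IsCompact K →
      ∀ ε > (0 : ℝ), ∃ N : ℕ, ∀ n ≥ N, ∀ x ∈ K, dist x (ψ n (φ n x)) < ε)
    (K : Set X) (hK : IsCompact K) (G : X → Y) (hG : ContinuousOn G K)
    (ε : ℝ) (hε : 0 < ε) :
    ∃ (p q : ℕ) (Gt : (Fin (κ q) → ℝ) → (Fin p → ℝ)) (u : (Fin p → ℝ) → Y),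
      0 < p ∧ 0 < q ∧ Continuous Gt ∧ Continuous u ∧
      ∀ v ∈ K, ‖G v - u (Gt (φ q v))‖ < ε := by
  rcases K.eq_empty_or_nonempty with rfl | hKne
  · exact ⟨1, 1, 0, 0, one_pos, one_pos, continuous_const, continuous_const, by simp⟩
  obtain ⟨δ, hδ, hGδ⟩ :=
    uniformContinuousOn_iff.mp (hK.uniformContinuousOn_of_continuous hG) ε hε
  obtain ⟨N, hN⟩ := hP K hK (δ / 3) (by positivity)
  set q := max N 1
  obtain ⟨s, hs, hφs⟩ := hK.exists_dist_lt_of_dist_image_lt (hφ q)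
    ((hψ q).mono (image_subset_range _ _)) (hN q (le_max_left _ _)) (t := δ / 3) (by positivity)
  obtain ⟨p, Gt, u, hp, hu⟩ := exists_clm_comp_approx_of_dist_lt (hφ q) hK hKne hs (η := ε)
    fun v hv v' hv' h => hGδ v hv v' hv' (by linarith [hφs v hv v' hv' h])
  exact ⟨p, q, Gt, u, hp, lt_max_of_lt_right one_pos, Gt.continuous, u.continuous,
    fun v hv => dist_eq_norm (G v) _ ▸ hu v hv⟩

/-- Approximation theorem for metric-to-Banach mappings.
`X` is a metric space with a discretization system: `κ` strictly increasing,
encoders `φ n : X → ℝ^{κ n}` continuous, decoders `ψ n` continuous on `φ n '' X`,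
projections `P n = ψ n ∘ φ n` converging uniformly to the identity on compact sets.
`Y` is a Banach space, `K ⊆ X` compact, `G` continuous on `K`. For every `ε > 0`
there are positive integers `p, q`, a continuous `G̃ : ℝ^{κ q} → ℝ^p` and a
continuous `u : ℝ^p → Y` with `sup_{v∈K} ‖G v − u (G̃ (φ q v))‖ < ε`. -/
theorem stmt_2 {X : Type*} [MetricSpace X] {Y : Type*} [NormedAddCommGroup Y]
    [NormedSpace ℝ Y] [CompleteSpace Y]
    (κ : ℕ → ℕ) (hκ : StrictMono κ)
    (φ : ∀ n : ℕ, X → (Fin (κ n) → ℝ))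
    (ψ : ∀ n : ℕ, (Fin (κ n) → ℝ) → X)
    (hφ : ∀ n, Continuous (φ n))
    (hψ : ∀ n, ContinuousOn (ψ n) (Set.range (φ n)))
    (hP : ∀ K : Set X, IsCompact K →
      ∀ ε > (0 : ℝ), ∃ N : ℕ, ∀ n ≥ N, ∀ x ∈ K, dist x (ψ n (φ n x)) < ε)
    (K : Set X) (hK : IsCompact K) (G : X → Y) (hG : ContinuousOn G K)
    (ε : ℝ) (hε : 0 < ε) :
    ∃ (p q : ℕ) (Gt : (Fin (κ q) → ℝ) → (Fin p → ℝ)) (u : (Fin p → ℝ) → Y),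
      0 < p ∧ 0 < q ∧ Continuous Gt ∧ Continuous u ∧
      ∀ v ∈ K, ‖G v - u (Gt (φ q v))‖ < ε :=
  stmt_2_general κ φ ψ hφ hψ hP K hK G hG ε hε
end

section
/- Let X be a metric space with a discretization system (φ_n, ψ_n, P_n) as above, Y a Banach space, K ⊂ X compact, and G : K → Y continuous. Then for every ε > 0 there exist p, q ∈ ℕ, continuous functions g_j ∈ C(ℝ^{κ(q)}) and elements u_j ∈ Y (j = 1,…,p) such that sup_{v∈K} ‖G(v) − Σ_{j=1}^p g_j(φ_q(v))·u_j‖_Y < ε. -/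
/-!
Choose `q` so large that `ψ_q ∘ φ_q` moves points of `K` by less than `δ/3`, where `δ` is a
modulus of uniform continuity of `G` for `ε/2`. Uniform continuity of `ψ_q` on the compact set
`φ_q(K)` then shows that points of `K` with nearby codes `φ_q v`, `φ_q w` are `δ`-close, so `G`
varies by at most `ε/2` there. A partition of unity on `ℝ^{κ(q)}` subordinate to small balls
around the codes of points `w ∈ K` turns this into the approximation
`G v ≈ ∑_w g_w(φ_q v) • G w`, a convex combination of values of `G` close to `G v`.
-/

open Set Metric

theorem norm_sub_sum_smul_le {ι E : Type*} [NormedAddCommGroup E] [NormedSpace ℝ E]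
    {t : Finset ι} {c : ι → ℝ} {y : E} {u : ι → E} {ε : ℝ} (hc : ∀ i ∈ t, 0 ≤ c i)
    (hsum : ∑ i ∈ t, c i = 1) (hu : ∀ i ∈ t, c i ≠ 0 → ‖y - u i‖ ≤ ε) :
    ‖y - ∑ i ∈ t, c i • u i‖ ≤ ε := by
  have hterm : ∀ i ∈ t, c i * ‖y - u i‖ ≤ c i * ε := fun i hi => by
    rcases eq_or_ne (c i) 0 with h0 | hne
    · simp [h0]
    · exact mul_le_mul_of_nonneg_left (hu i hi hne) (hc i hi)
  calc ‖y - ∑ i ∈ t, c i • u i‖ = ‖∑ i ∈ t, c i • (y - u i)‖ := by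
        simp only [smul_sub, Finset.sum_sub_distrib, ← Finset.sum_smul, hsum, one_smul]
    _ ≤ ∑ i ∈ t, c i * ‖y - u i‖ := by
        refine (norm_sum_le _ _).trans_eq (Finset.sum_congr rfl fun i hi => ?_)
        rw [norm_smul, Real.norm_of_nonneg (hc i hi)]
    _ ≤ ∑ i ∈ t, c i * ε := Finset.sum_le_sum hterm
    _ = ε := by rw [← Finset.sum_mul, hsum, one_mul]

theorem IsCompact.exists_sum_smul_comp_approx {X Z Y : Type*} [TopologicalSpace X]
    [MetricSpace Z] [NormedAddCommGroup Y] [NormedSpace ℝ Y] {K : Set X} (hK : IsCompact K)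
    {h : X → Z} (hh : ContinuousOn h K) {F : X → Y} {η ε : ℝ} (hη : 0 < η)
    (hF : ∀ v ∈ K, ∀ w ∈ K, dist (h v) (h w) < η → ‖F v - F w‖ ≤ ε) :
    ∃ (t : Finset K) (g : K → Z → ℝ), (∀ w, Continuous (g w)) ∧
      ∀ v ∈ K, ‖F v - ∑ w ∈ t, g w (h v) • F w‖ ≤ ε := by
  have hA : IsCompact (h '' K) := hK.image_of_continuousOn hh
  obtain ⟨ρ, hρ⟩ := PartitionOfUnity.exists_isSubordinate hA.isClosed
    (fun w : K => ball (h w) η) (fun _ => isOpen_ball) <| by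
      rintro _ ⟨v, hv, rfl⟩
      exact mem_iUnion.2 ⟨⟨v, hv⟩, mem_ball_self hη⟩
  set t := (ρ.locallyFinite.finite_nonempty_inter_compact hA).toFinset
  refine ⟨t, fun w => ρ w, fun w => (ρ w).continuous, fun v hv => ?_⟩
  have hvA : h v ∈ h '' K := mem_image_of_mem h hv
  refine norm_sub_sum_smul_le (fun w _ => ρ.nonneg w _) (ρ.sum_finsupport' hvA fun w hw => ?_)
    fun w _ hw => hF v hv w w.2 (mem_ball.1 (hρ w (subset_tsupport _ hw)))
  simp only [t, Finite.mem_toFinset, mem_ofPred_eq]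
  exact ⟨h v, (ρ.mem_finsupport _).1 hw, hvA⟩

theorem IsCompact.exists_pos_forall_dist_lt_of_approxLeftInverse {X Z : Type*}
    [PseudoMetricSpace X] [PseudoMetricSpace Z] {K : Set X} (hK : IsCompact K) {φ : X → Z}
    {ψ : Z → X} (hφ : ContinuousOn φ K) (hψ : ContinuousOn ψ (φ '' K)) {r : ℝ}
    (hψφ : ∀ x ∈ K, dist x (ψ (φ x)) ≤ r) {δ : ℝ} (hδ : 2 * r < δ) :
    ∃ η > 0, ∀ v ∈ K, ∀ w ∈ K, dist (φ v) (φ w) < η → dist v w < δ := by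
  obtain ⟨η, hη, hψη⟩ := uniformContinuousOn_iff.1
    ((hK.image_of_continuousOn hφ).uniformContinuousOn_of_continuous hψ) (δ - 2 * r)
    (by linarith)
  refine ⟨η, hη, fun v hv w hw hvw => ?_⟩
  have hψ_close := hψη _ (mem_image_of_mem φ hv) _ (mem_image_of_mem φ hw) hvw
  have hv_near := hψφ v hv
  have hw_near := hψφ w hw
  rw [dist_comm] at hw_near
  linarith [dist_triangle4 v (ψ (φ v)) (ψ (φ w)) w]

theorem Finset.exists_pos_fin_sum_smul_eq {α Z M : Type*} [TopologicalSpace Z]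
    [AddCommMonoid M] [Module ℝ M] (t : Finset α) {g : α → Z → ℝ} (hg : ∀ a, Continuous (g a))
    (u : α → M) :
    ∃ (p : ℕ) (g' : Fin p → Z → ℝ) (u' : Fin p → M), 0 < p ∧ (∀ j, Continuous (g' j)) ∧
      ∀ z, ∑ j, g' j z • u' j = ∑ a ∈ t, g a z • u a := by
  set e := t.equivFin.symm
  refine ⟨t.card + 1, Fin.cons 0 fun j => g (e j), Fin.cons 0 fun j => u (e j), t.card.succ_pos,
    Fin.cases continuous_const fun j => hg _, fun z => ?_⟩
  simp only [Fin.sum_univ_succ, Fin.cons_zero, Fin.cons_succ, Pi.zero_apply, zero_smul, zero_add]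
  exact (e.sum_comp fun a => g a z • u a).trans (t.sum_coe_sort fun a => g a z • u a)

theorem stmt_3_general {X : Type*} [MetricSpace X] {Y : Type*} [NormedAddCommGroup Y]
    [NormedSpace ℝ Y]
    (κ : ℕ → ℕ)
    (φ : ∀ n : ℕ, X → (Fin (κ n) → ℝ))
    (ψ : ∀ n : ℕ, (Fin (κ n) → ℝ) → X)
    (hφ : ∀ n, Continuous (φ n))
    (hψ : ∀ n, ContinuousOn (ψ n) (Set.range (φ n)))
    (hP : ∀ K : Set X, IsCompact K →
      ∀ ε > (0 : ℝ), ∃ N : ℕ, ∀ n ≥ N, ∀ x ∈ K, dist x (ψ n (φ n x)) < ε)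
    (K : Set X) (hK : IsCompact K) (G : X → Y) (hG : ContinuousOn G K)
    (ε : ℝ) (hε : 0 < ε) :
    ∃ (p q : ℕ) (g : Fin p → (Fin (κ q) → ℝ) → ℝ) (u : Fin p → Y),
      0 < p ∧ 0 < q ∧ (∀ j, Continuous (g j)) ∧
      ∀ v ∈ K, ‖G v - ∑ j : Fin p, g j (φ q v) • u j‖ < ε := by
  obtain ⟨δ, hδ, hGδ⟩ := uniformContinuousOn_iff.1 (hK.uniformContinuousOn_of_continuous hG)
    (ε / 2) (half_pos hε)
  obtain ⟨N, hN⟩ := hP K hK (δ / 3) (by positivity)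
  set q := max N 1
  obtain ⟨η, hη, hφη⟩ := hK.exists_pos_forall_dist_lt_of_approxLeftInverse (hφ q).continuousOn
    ((hψ q).mono (image_subset_range _ _)) (fun x hx => (hN q (le_max_left _ _) x hx).le)
    (by linarith : 2 * (δ / 3) < δ)
  obtain ⟨t, g, hg, hGg⟩ := hK.exists_sum_smul_comp_approx (hφ q).continuousOn hη
    fun v hv w hw hvw => (dist_eq_norm (G v) (G w) ▸ hGδ v hv w hw (hφη v hv w hw hvw)).le
  obtain ⟨p, g', u, hp, hg', hsum⟩ := t.exists_pos_fin_sum_smul_eq hg fun w => G w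
  refine ⟨p, q, g', u, hp, le_max_right N 1, hg', fun v hv => ?_⟩
  rw [hsum]
  exact (hGg v hv).trans_lt (half_lt_self hε)

/-- Separable (tensor-product) form of the approximation theorem
for metric-to-Banach mappings, underlying MIONet. With the same discretization
system as before, for every `ε > 0` there exist `p, q`, continuous functions
`g j : ℝ^{κ q} → ℝ` and elements `u j ∈ Y` (`j = 1,…,p`) such that
`sup_{v∈K} ‖G v − Σ_{j=1}^p g j (φ q v) • u j‖ < ε`. -/
theorem stmt_3 {X : Type*} [MetricSpace X] {Y : Type*} [NormedAddCommGroup Y]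
    [NormedSpace ℝ Y] [CompleteSpace Y]
    (κ : ℕ → ℕ) (hκ : StrictMono κ)
    (φ : ∀ n : ℕ, X → (Fin (κ n) → ℝ))
    (ψ : ∀ n : ℕ, (Fin (κ n) → ℝ) → X)
    (hφ : ∀ n, Continuous (φ n))
    (hψ : ∀ n, ContinuousOn (ψ n) (Set.range (φ n)))
    (hP : ∀ K : Set X, IsCompact K →
      ∀ ε > (0 : ℝ), ∃ N : ℕ, ∀ n ≥ N, ∀ x ∈ K, dist x (ψ n (φ n x)) < ε)
    (K : Set X) (hK : IsCompact K) (G : X → Y) (hG : ContinuousOn G K)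
    (ε : ℝ) (hε : 0 < ε) :
    ∃ (p q : ℕ) (g : Fin p → (Fin (κ q) → ℝ) → ℝ) (u : Fin p → Y),
      0 < p ∧ 0 < q ∧ (∀ j, Continuous (g j)) ∧
      ∀ v ∈ K, ‖G v - ∑ j : Fin p, g j (φ q v) • u j‖ < ε :=
  stmt_3_general κ φ ψ hφ hψ hP K hK G hG ε hε
end

section
/- Let X₁,…,X_n be metric spaces each satisfying the discretization assumption with encoders φ^i_q : X_i → ℝ^{κ_i(q)} and projections P^i_q converging uniformly to the identity on compacts, and let Y be a Banach space. Let K_i ⊂ X_i be compact and G : K₁ × ⋯ × K_n → Y continuous. Then for every ε > 0 there exist p and q_i ∈ ℕ, continuous functions g^i_j ∈ C(ℝ^{κ_i(q_i)}) and u_j ∈ Y, such that sup ‖G(v₁,…,v_n) − Σ_{j=1}^p g^1_j(φ^1_{q₁}(v₁))⋯g^n_j(φ^n_{q_n}(v_n))·u_j‖_Y < ε uniformly over v_i ∈ K_i. -/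
/-!
A partition of unity on the compact set `∏ Kᵢ` approximates `G` by `∑ₖ ρₖ(v) • G(cₖ)`, and
Stone–Weierstrass replaces each `ρₖ` by an element of the algebra generated by the products
`v ↦ ∏ᵢ fᵢ(vᵢ)`, `fᵢ ∈ C(Xᵢ, ℝ)`. This gives `F(v) = ∑ⱼ (∏ᵢ fᵢⱼ(vᵢ)) • uⱼ` within `ε / 2` of `G`,
continuous on the whole of `∏ Xᵢ`. By Tietze, `fᵢⱼ ∘ ψ` extends from the compact set
`φ(Kᵢ)` to some `gᵢⱼ ∈ C(ℝ^κ, ℝ)`, so that the discretized sum is exactly `F(P v)`; as `P → id`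
uniformly on the `Kᵢ`, `F(P v)` is within `ε / 2` of `F(v)` uniformly on `∏ Kᵢ`.
-/

open Set Submodule

theorem exists_sum_smul_near_of_isCompact {Z Y : Type*} [TopologicalSpace Z] [NormalSpace Z]
    [ParacompactSpace Z] [T2Space Z] [NormedAddCommGroup Y] [NormedSpace ℝ Y]
    {S : Set Z} (hS : IsCompact S) {G : Z → Y} (hG : ContinuousOn G S) {ε : ℝ} (hε : 0 < ε) :
    ∃ (t : Finset Z) (ρ : t → C(Z, ℝ)), ∀ v ∈ S, ‖G v - ∑ c, ρ c v • G c‖ < ε := by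
  choose U hUo hU using fun c =>
    continuousOn_iff'.1 hG _ (Metric.isOpen_ball (x := G c) (ε := ε))
  obtain ⟨t, hSt⟩ := hS.elim_finite_subcover U hUo fun v hv =>
    mem_iUnion.2 ⟨v, ((Set.ext_iff.1 (hU v) v).1 ⟨Metric.mem_ball_self hε, hv⟩).1⟩
  obtain ⟨ρ, hρ⟩ := PartitionOfUnity.exists_isSubordinate hS.isClosed (fun c : t => U c)
    (fun c => hUo c) fun v hv => by
      obtain ⟨c, hc, hvc⟩ := mem_iUnion₂.1 (hSt hv)
      exact mem_iUnion.2 ⟨⟨c, hc⟩, hvc⟩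
  refine ⟨t, fun c => ρ c, fun v hv => ?_⟩
  have hmem : ∑ᶠ c, ρ c v • G c ∈ Metric.ball (G v) ε := by
    refine ρ.finsum_smul_mem_convex (g := fun c _ => G c) hv (fun c hc => ?_) (convex_ball _ _)
    have hvU : v ∈ U c ∩ S := ⟨hρ c (subset_tsupport _ hc), hv⟩
    rw [← hU] at hvU
    exact Metric.mem_ball_comm.1 hvU.1
  rwa [finsum_eq_sum_of_fintype, Metric.mem_ball, dist_eq_norm'] at hmem

theorem IsCompact.exists_forall_dist_lt {α β : Type*} [PseudoMetricSpace α] [PseudoMetricSpace β]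
    {s : Set α} (hs : IsCompact s) {f : α → β} (hf : ∀ a ∈ s, ContinuousAt f a) {ε : ℝ}
    (hε : 0 < ε) : ∃ δ > 0, ∀ x ∈ s, ∀ y, dist x y < δ → dist (f x) (f y) < ε := by
  obtain ⟨δ, hδ, h⟩ := Metric.mem_uniformity_dist.1
    (hs.uniformContinuousAt_of_continuousAt f hf (Metric.dist_mem_uniformity hε))
  exact ⟨δ, hδ, fun x hx y hxy => h hxy hx⟩

theorem exists_continuousMap_comp_eq_of_isCompact {X E : Type*} [TopologicalSpace X]
    [TopologicalSpace E] [NormalSpace E] [T2Space E] {φ : X → E} {ψ : E → X}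
    (hφ : Continuous φ) (hψ : ContinuousOn ψ (range φ)) {K : Set X} (hK : IsCompact K)
    (f : C(X, ℝ)) : ∃ g : C(E, ℝ), ∀ x ∈ K, g (φ x) = f (ψ (φ x)) := by
  have hfψ : ContinuousOn (f ∘ ψ) (φ '' K) :=
    f.continuous.comp_continuousOn (hψ.mono (image_subset_range φ K))
  obtain ⟨g, hg⟩ := ContinuousMap.exists_restrict_eq (hK.image hφ).isClosed ⟨_, hfψ.domRestrict⟩
  exact ⟨g, fun x hx => DFunLike.congr_fun hg ⟨φ x, mem_image_of_mem φ hx⟩⟩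

theorem norm_sum_smul_sub_sum_smul_le {ι E : Type*} [NormedAddCommGroup E] [NormedSpace ℝ E]
    (s : Finset ι) {a b : ι → ℝ} {η : ℝ} (h : ∀ i ∈ s, |a i - b i| ≤ η) (y : ι → E) :
    ‖∑ i ∈ s, a i • y i - ∑ i ∈ s, b i • y i‖ ≤ η * ∑ i ∈ s, ‖y i‖ := by
  rw [← Finset.sum_sub_distrib, Finset.mul_sum]
  refine (norm_sum_le _ _).trans (Finset.sum_le_sum fun i hi => ?_)
  rw [← sub_smul, norm_smul, Real.norm_eq_abs]
  exact mul_le_mul_of_nonneg_right (h i hi) (norm_nonneg _)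

namespace MIONet

variable {n : ℕ}

section Topological

variable {X : Fin n → Type*} [∀ i, TopologicalSpace (X i)]
  {Y : Type*} [NormedAddCommGroup Y] [NormedSpace ℝ Y]

variable (X) in
def elementaryProducts : Submonoid C(∀ i, X i, ℝ) where
  carrier := range fun f : ∀ i, C(X i, ℝ) => ∏ i, (f i).comp (ContinuousMap.eval i)
  mul_mem' := by
    rintro _ _ ⟨f, rfl⟩ ⟨g, rfl⟩
    exact ⟨f * g, by simp only [Pi.mul_apply, ContinuousMap.mul_comp, Finset.prod_mul_distrib]⟩
  one_mem' := ⟨1, by simp only [Pi.one_apply, ContinuousMap.one_comp, Finset.prod_const_one]⟩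

theorem comp_eval_mem_elementaryProducts (i : Fin n) (f : C(X i, ℝ)) :
    f.comp (ContinuousMap.eval i) ∈ elementaryProducts X := by
  refine ⟨Pi.mulSingle (M := fun k => C(X k, ℝ)) i f, ?_⟩
  refine (Finset.prod_eq_single i (fun k _ hk => ?_) (by simp)).trans (by simp)
  rw [Pi.mulSingle_eq_of_ne hk, ContinuousMap.one_comp]

variable (X Y) in
def elementaryTensors : Set ((∀ i, X i) → Y) :=
  {F | ∃ (f : ∀ i, C(X i, ℝ)) (y : Y), F = fun v => (∏ i, f i (v i)) • y}

theorem toSubmodule_adjoin_elementaryProducts :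
    Subalgebra.toSubmodule (Algebra.adjoin ℝ (elementaryProducts X : Set C(∀ i, X i, ℝ))) =
      span ℝ (elementaryProducts X) := by
  rw [Algebra.adjoin_eq_span, Submonoid.closure_eq]

theorem smul_const_mem_span_elementaryTensors {a : C(∀ i, X i, ℝ)}
    (ha : a ∈ Algebra.adjoin ℝ (elementaryProducts X : Set C(∀ i, X i, ℝ))) (y : Y) :
    (fun v => a v • y) ∈ span ℝ (elementaryTensors X Y) := by
  let L : C(∀ i, X i, ℝ) →ₗ[ℝ] (∀ i, X i) → Y :=
    (LinearMap.smulRight LinearMap.id y).compLeft _ ∘ₗ ContinuousMap.coeFnLinearMap ℝ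
  have hL : map L (span ℝ (elementaryProducts X)) ≤ span ℝ (elementaryTensors X Y) := by
    rw [map_span, span_le]
    rintro _ ⟨_, ⟨f, rfl⟩, rfl⟩
    exact subset_span ⟨f, y, by ext v; simp [L, ContinuousMap.prod_apply]⟩
  rw [← Subalgebra.mem_toSubmodule, toSubmodule_adjoin_elementaryProducts] at ha
  exact hL ⟨a, ha, rfl⟩

theorem exists_eq_sum_prod_smul_of_mem_span {F : (∀ i, X i) → Y}
    (hF : F ∈ span ℝ (elementaryTensors X Y)) :
    ∃ (p : ℕ) (f : ∀ i, Fin p → C(X i, ℝ)) (u : Fin p → Y),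
      0 < p ∧ F = fun v => ∑ j, (∏ i, f i j (v i)) • u j := by
  obtain ⟨m, c, T, rfl⟩ := mem_span_set'.1 hF
  choose f y hT using fun j => (T j).2
  refine ⟨m + 1, fun i => Fin.cons 1 fun j => f j i, Fin.cons 0 fun j => c j • y j,
    m.succ_pos, funext fun v => ?_⟩
  simp [Fin.sum_univ_succ, hT, smul_comm (c _)]

end Topological

section Metric

variable {X : Fin n → Type*} [∀ i, MetricSpace (X i)]
  {Y : Type*} [NormedAddCommGroup Y] [NormedSpace ℝ Y]

theorem adjoin_elementaryProducts_separatesPoints :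
    (Algebra.adjoin ℝ (elementaryProducts X : Set C(∀ i, X i, ℝ))).SeparatesPoints := by
  intro v w hvw
  obtain ⟨i, hi⟩ := Function.ne_iff.1 hvw
  let d : C(X i, ℝ) := ⟨fun x => dist x (w i), by fun_prop⟩
  refine ⟨_, ⟨_, Algebra.subset_adjoin (comp_eval_mem_elementaryProducts i d), rfl⟩, ?_⟩
  simpa [d] using hi

theorem exists_mem_span_elementaryTensors_near {S : Set (∀ i, X i)} (hS : IsCompact S)
    {G : (∀ i, X i) → Y} (hG : ContinuousOn G S) {ε : ℝ} (hε : 0 < ε) :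
    ∃ F ∈ span ℝ (elementaryTensors X Y), ∀ v ∈ S, ‖G v - F v‖ < ε := by
  obtain ⟨t, ρ, hρ⟩ := exists_sum_smul_near_of_isCompact hS hG (half_pos hε)
  set η := ε / 2 / (∑ c : t, ‖G c‖ + 1)
  have hη : 0 < η := by positivity
  choose a ha haS using fun c =>
    ContinuousMap.exists_mem_subalgebra_near_continuous_of_isCompact_of_separatesPoints
      adjoin_elementaryProducts_separatesPoints (ρ c) hS hη
  refine ⟨fun v => ∑ c, a c v • G c, ?_, fun v hv => ?_⟩
  · simpa only [Finset.sum_fn] using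
      sum_mem fun c _ => smul_const_mem_span_elementaryTensors (ha c) (G c)
  have hρa : ‖∑ c, ρ c v • G c - ∑ c, a c v • G c‖ ≤ ε / 2 := calc
    _ ≤ η * ∑ c : t, ‖G c‖ := norm_sum_smul_sub_sum_smul_le _ (fun c _ => by
        rw [abs_sub_comm]; exact (haS c v hv).le) _
    _ ≤ η * (∑ c : t, ‖G c‖ + 1) := by gcongr; linarith
    _ = ε / 2 := div_mul_cancel₀ _ (by positivity)
  calc ‖G v - ∑ c, a c v • G c‖
      ≤ ‖G v - ∑ c, ρ c v • G c‖ + ‖∑ c, ρ c v • G c - ∑ c, a c v • G c‖ :=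
        norm_sub_le_norm_sub_add_norm_sub _ _ _
    _ < ε / 2 + ε / 2 := add_lt_add_of_lt_of_le (hρ v hv) hρa
    _ = ε := add_halves ε

end Metric

end MIONet

theorem stmt_4_general {n : ℕ} {X : Fin n → Type*} [∀ i, MetricSpace (X i)]
    {Y : Type*} [NormedAddCommGroup Y] [NormedSpace ℝ Y]
    (κ : Fin n → ℕ → ℕ)
    (φ : ∀ (i : Fin n) (q : ℕ), X i → (Fin (κ i q) → ℝ))
    (ψ : ∀ (i : Fin n) (q : ℕ), (Fin (κ i q) → ℝ) → X i)
    (hφ : ∀ i q, Continuous (φ i q))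
    (hψ : ∀ i q, ContinuousOn (ψ i q) (Set.range (φ i q)))
    (hP : ∀ (i : Fin n) (K : Set (X i)), IsCompact K →
      ∀ ε > (0 : ℝ), ∃ N : ℕ, ∀ q ≥ N, ∀ x ∈ K, dist x (ψ i q (φ i q x)) < ε)
    (K : ∀ i, Set (X i)) (hK : ∀ i, IsCompact (K i))
    (G : (∀ i, X i) → Y) (hG : ContinuousOn G (Set.univ.pi K))
    (ε : ℝ) (hε : 0 < ε) :
    ∃ (p : ℕ) (q : Fin n → ℕ)
      (g : ∀ i : Fin n, Fin p → (Fin (κ i (q i)) → ℝ) → ℝ) (u : Fin p → Y),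
      0 < p ∧ (∀ i j, Continuous (g i j)) ∧
      ∀ v ∈ Set.univ.pi K,
        ‖G v - ∑ j : Fin p, (∏ i : Fin n, g i j (φ i (q i) (v i))) • u j‖ < ε := by
  have hS := isCompact_univ_pi hK
  obtain ⟨F, hF, hGF⟩ := MIONet.exists_mem_span_elementaryTensors_near hS hG (half_pos hε)
  obtain ⟨p, f, u, hp, hFf⟩ := MIONet.exists_eq_sum_prod_smul_of_mem_span hF
  have hFc : Continuous F := by rw [hFf]; fun_prop
  obtain ⟨δ, hδ, hFδ⟩ := hS.exists_forall_dist_lt (fun _ _ => hFc.continuousAt) (half_pos hε)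
  choose q hq using fun i => hP i (K i) (hK i) δ hδ
  choose g hg using fun i j =>
    exists_continuousMap_comp_eq_of_isCompact (hφ i (q i)) (hψ i (q i)) (hK i) (f i j)
  refine ⟨p, q, fun i j => g i j, u, hp, fun i j => (g i j).continuous, fun v hv => ?_⟩
  have hvK i : v i ∈ K i := hv i (Set.mem_univ i)
  set Pv := fun i => ψ i (q i) (φ i (q i) (v i))
  have hPv : dist v Pv < δ := (dist_pi_lt_iff hδ).2 fun i => hq i (q i) le_rfl (v i) (hvK i)
  have hgF : ∑ j, (∏ i, g i j (φ i (q i) (v i))) • u j = F Pv := by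
    simp only [hFf, hg _ _ _ (hvK _), Pv]
  calc ‖G v - ∑ j, (∏ i, g i j (φ i (q i) (v i))) • u j‖
      ≤ ‖G v - F v‖ + ‖F v - F Pv‖ := hgF ▸ norm_sub_le_norm_sub_add_norm_sub _ _ _
    _ < ε / 2 + ε / 2 := add_lt_add (hGF v hv) (dist_eq_norm (F v) _ ▸ hFδ v hv Pv hPv)
    _ = ε := add_halves ε

/-- MIONet approximation theorem on metric spaces (Theorem C.1).
`X i` are metric spaces, each with a discretization system (encoders `φ i q`
continuous into `ℝ^{κ i q}`, decoders `ψ i q` continuous on the encoder image,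
projections converging uniformly to the identity on compacts); `Y` is a Banach
space; `K i ⊆ X i` compact, `G` continuous on `K₁ × ⋯ × Kₙ`. For every `ε > 0`
there exist `p`, `q i`, continuous `g i j : ℝ^{κ i (q i)} → ℝ` and `u j ∈ Y` with
`sup ‖G(v₁,…,vₙ) − Σ_j (Π_i g i j (φ i (q i) (v i))) • u j‖ < ε` over `v i ∈ K i`. -/
theorem stmt_4 {n : ℕ} {X : Fin n → Type*} [∀ i, MetricSpace (X i)]
    {Y : Type*} [NormedAddCommGroup Y] [NormedSpace ℝ Y] [CompleteSpace Y]
    (κ : Fin n → ℕ → ℕ) (hκ : ∀ i, StrictMono (κ i))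
    (φ : ∀ (i : Fin n) (q : ℕ), X i → (Fin (κ i q) → ℝ))
    (ψ : ∀ (i : Fin n) (q : ℕ), (Fin (κ i q) → ℝ) → X i)
    (hφ : ∀ i q, Continuous (φ i q))
    (hψ : ∀ i q, ContinuousOn (ψ i q) (Set.range (φ i q)))
    (hP : ∀ (i : Fin n) (K : Set (X i)), IsCompact K →
      ∀ ε > (0 : ℝ), ∃ N : ℕ, ∀ q ≥ N, ∀ x ∈ K, dist x (ψ i q (φ i q x)) < ε)
    (K : ∀ i, Set (X i)) (hK : ∀ i, IsCompact (K i))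
    (G : (∀ i, X i) → Y) (hG : ContinuousOn G (Set.univ.pi K))
    (ε : ℝ) (hε : 0 < ε) :
    ∃ (p : ℕ) (q : Fin n → ℕ)
      (g : ∀ i : Fin n, Fin p → (Fin (κ i (q i)) → ℝ) → ℝ) (u : Fin p → Y),
      0 < p ∧ (∀ i j, Continuous (g i j)) ∧
      ∀ v ∈ Set.univ.pi K,
        ‖G v - ∑ j : Fin p, (∏ i : Fin n, g i j (φ i (q i) (v i))) • u j‖ < ε :=
  stmt_4_general κ φ ψ hφ hψ hP K hK G hG ε hε
end

section
/- Let Ω₀ = B(0,1) ⊂ ℝ^d, and for each star domain Ω define D[Ω](x) := c_Ω + b_Ω(x/‖x‖₂)·x on Ω₀. Then for any two star domains Ω₁, Ω₂: ‖D[Ω₁] − D[Ω₂]‖_{L²(Ω₀, ℝ^d)} ≤ d_U(Ω₁, Ω₂) · (∫_{Ω₀} (1 + ‖x‖₂)² dx)^{1/2}. In particular, the deformation system D : U → L²(Ω₀, ℝ^d) is Lipschitz continuous. -/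
/-!
The difference of two deformations at `x` is `(c₁ - c₂) + (b₁ - b₂)(x / ‖x‖) • x`, whose norm is at
most `‖c₁ - c₂‖ + sup |b₁ - b₂| · ‖x‖ ≤ d_U(Ω₁, Ω₂) (1 + ‖x‖)`; squaring and integrating over the
unit ball gives the bound. The supremum is finite because Lipschitz functions are continuous on the
compact unit sphere.
-/

open MeasureTheory Metric

/-- The paper's `D[Ω]` for the star domain `Ω` with centroid `c` and boundary function `b`. -/
noncomputable def starDeformation {E : Type*} [NormedAddCommGroup E] [NormedSpace ℝ E]
    (c : E) (b : E → ℝ) (x : E) : E :=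
  c + b (‖x‖⁻¹ • x) • x

theorem IsCompact.le_ciSup_of_continuousOn {X : Type*} [TopologicalSpace X] {K : Set X}
    {f : X → ℝ} (hK : IsCompact K) (hf : ContinuousOn f K) {x : X} (hx : x ∈ K) :
    f x ≤ ⨆ e : K, f e := by
  have hbdd : BddAbove (Set.range fun e : K => f e) := by
    simpa only [Set.image_eq_range] using hK.bddAbove_image hf
  exact le_ciSup hbdd ⟨x, hx⟩

theorem norm_starDeformation_sub_le {E : Type*} [NormedAddCommGroup E] [NormedSpace ℝ E]
    (c₁ c₂ : E) {b₁ b₂ : E → ℝ} {S : ℝ} (hS₀ : 0 ≤ S)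
    (hS : ∀ e ∈ sphere (0 : E) 1, |b₁ e - b₂ e| ≤ S) (x : E) :
    ‖starDeformation c₁ b₁ x - starDeformation c₂ b₂ x‖ ≤ (dist c₁ c₂ + S) * (1 + ‖x‖) := by
  set u := ‖x‖⁻¹ • x
  have hsplit : starDeformation c₁ b₁ x - starDeformation c₂ b₂ x
      = (c₁ - c₂) + (b₁ u - b₂ u) • x := by
    simp only [starDeformation, sub_smul]
    abel
  have hbu : |b₁ u - b₂ u| * ‖x‖ ≤ S * ‖x‖ := by
    rcases eq_or_ne x 0 with rfl | hx
    · simp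
    · exact mul_le_mul_of_nonneg_right (hS u (by simpa using norm_smul_inv_norm (𝕜 := ℝ) hx))
        (norm_nonneg x)
  calc ‖starDeformation c₁ b₁ x - starDeformation c₂ b₂ x‖
      ≤ ‖c₁ - c₂‖ + |b₁ u - b₂ u| * ‖x‖ := by
        rw [hsplit, ← Real.norm_eq_abs, ← norm_smul]
        exact norm_add_le _ _
    _ ≤ dist c₁ c₂ + S * ‖x‖ := by rw [← dist_eq_norm]; linarith
    _ ≤ (dist c₁ c₂ + S) * (1 + ‖x‖) := by nlinarith [dist_nonneg (x := c₁) (y := c₂), norm_nonneg x]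

theorem rpow_half_integral_sq_le_mul {α : Type*} [MeasurableSpace α] {μ : Measure α}
    {f g : α → ℝ} {M : ℝ} (hM : 0 ≤ M) (hf : 0 ≤ᵐ[μ] f) (hfg : ∀ᵐ x ∂μ, f x ≤ M * g x)
    (hg : Integrable (fun x => g x ^ 2) μ) :
    (∫ x, f x ^ 2 ∂μ) ^ (1 / 2 : ℝ) ≤ M * (∫ x, g x ^ 2 ∂μ) ^ (1 / 2 : ℝ) := by
  have hsq : ∫ x, f x ^ 2 ∂μ ≤ M ^ 2 * ∫ x, g x ^ 2 ∂μ := by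
    rw [← integral_const_mul]
    refine integral_mono_of_nonneg (hf.mono fun x hx => sq_nonneg (f x)) (hg.const_mul _) ?_
    filter_upwards [hf, hfg] with x hx₀ hx
    calc f x ^ 2 ≤ (M * g x) ^ 2 := pow_le_pow_left₀ hx₀ hx 2
      _ = M ^ 2 * g x ^ 2 := mul_pow M (g x) 2
  calc (∫ x, f x ^ 2 ∂μ) ^ (1 / 2 : ℝ)
      ≤ (M ^ 2 * ∫ x, g x ^ 2 ∂μ) ^ (1 / 2 : ℝ) :=
        Real.rpow_le_rpow (integral_nonneg fun x => sq_nonneg (f x)) hsq (by norm_num)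
    _ = M * (∫ x, g x ^ 2 ∂μ) ^ (1 / 2 : ℝ) := by
        rw [Real.mul_rpow (sq_nonneg M) (integral_nonneg fun x => sq_nonneg (g x)),
          ← Real.sqrt_eq_rpow, Real.sqrt_sq hM]

theorem stmt_7_general {d : ℕ}
    (c₁ c₂ : EuclideanSpace ℝ (Fin d)) (b₁ b₂ : EuclideanSpace ℝ (Fin d) → ℝ)
    (L₁ L₂ : NNReal)
    (hb₁ : LipschitzOnWith L₁ b₁ (Metric.sphere (0 : EuclideanSpace ℝ (Fin d)) 1))
    (hb₂ : LipschitzOnWith L₂ b₂ (Metric.sphere (0 : EuclideanSpace ℝ (Fin d)) 1)) :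
    (∫ x in Metric.ball (0 : EuclideanSpace ℝ (Fin d)) 1,
        ‖(c₁ + b₁ (‖x‖⁻¹ • x) • x) - (c₂ + b₂ (‖x‖⁻¹ • x) • x)‖ ^ 2) ^ (1/2 : ℝ)
      ≤ (dist c₁ c₂ + ⨆ e : Metric.sphere (0 : EuclideanSpace ℝ (Fin d)) 1,
            |b₁ e - b₂ e|) *
        (∫ x in Metric.ball (0 : EuclideanSpace ℝ (Fin d)) 1,
            (1 + ‖x‖) ^ 2) ^ (1/2 : ℝ) := by
  set S := ⨆ e : sphere (0 : EuclideanSpace ℝ (Fin d)) 1, |b₁ e - b₂ e|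
  have hS₀ : 0 ≤ S := Real.iSup_nonneg fun _ => abs_nonneg _
  have hS : ∀ e ∈ sphere (0 : EuclideanSpace ℝ (Fin d)) 1, |b₁ e - b₂ e| ≤ S := fun e he =>
    (isCompact_sphere 0 1).le_ciSup_of_continuousOn
      (hb₁.continuousOn.sub hb₂.continuousOn).abs he
  have hint : IntegrableOn (fun x : EuclideanSpace ℝ (Fin d) => (1 + ‖x‖) ^ 2) (ball 0 1) :=
    ((continuous_const.add continuous_norm).pow 2 |>.continuousOn.integrableOn_compact
      (isCompact_closedBall 0 1)).mono_set ball_subset_closedBall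
  exact rpow_half_integral_sq_le_mul (add_nonneg dist_nonneg hS₀)
    (.of_forall fun _ => norm_nonneg _)
    (.of_forall (norm_starDeformation_sub_le c₁ c₂ hS₀ hS)) hint

/-- Continuity (indeed Lipschitz continuity) of the star-domain
deformation system. `Ω₀ = B(0,1) ⊂ ℝ^d`, `D[Ω](x) = c_Ω + b_Ω(x/‖x‖)·x`, and for
any two star domains (given by centroids `c₁, c₂` and positive Lipschitz boundary
functions `b₁, b₂` on the unit sphere):
`‖D[Ω₁] − D[Ω₂]‖_{L²(Ω₀,ℝ^d)} ≤ d_U(Ω₁,Ω₂) · (∫_{Ω₀} (1+‖x‖)² dx)^{1/2}`,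
where `d_U(Ω₁,Ω₂) = ‖c₁−c₂‖ + sup_{e∈S} |b₁(e)−b₂(e)|`. -/
theorem stmt_7 {d : ℕ}
    (c₁ c₂ : EuclideanSpace ℝ (Fin d)) (b₁ b₂ : EuclideanSpace ℝ (Fin d) → ℝ)
    (L₁ L₂ : NNReal)
    (hb₁ : LipschitzOnWith L₁ b₁ (Metric.sphere (0 : EuclideanSpace ℝ (Fin d)) 1))
    (hb₂ : LipschitzOnWith L₂ b₂ (Metric.sphere (0 : EuclideanSpace ℝ (Fin d)) 1))
    (hb₁m : Measurable b₁) (hb₂m : Measurable b₂)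
    (hb₁p : ∀ e ∈ Metric.sphere (0 : EuclideanSpace ℝ (Fin d)) 1, 0 < b₁ e)
    (hb₂p : ∀ e ∈ Metric.sphere (0 : EuclideanSpace ℝ (Fin d)) 1, 0 < b₂ e) :
    (∫ x in Metric.ball (0 : EuclideanSpace ℝ (Fin d)) 1,
        ‖(c₁ + b₁ (‖x‖⁻¹ • x) • x) - (c₂ + b₂ (‖x‖⁻¹ • x) • x)‖ ^ 2) ^ (1/2 : ℝ)
      ≤ (dist c₁ c₂ + ⨆ e : Metric.sphere (0 : EuclideanSpace ℝ (Fin d)) 1,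
            |b₁ e - b₂ e|) *
        (∫ x in Metric.ball (0 : EuclideanSpace ℝ (Fin d)) 1,
            (1 + ‖x‖) ^ 2) ^ (1/2 : ℝ) :=
  stmt_7_general c₁ c₂ b₁ b₂ L₁ L₂ hb₁ hb₂
end

section
/- Under the same setting, if m(Ω) ≥ m₀ > 0 and m(Ω) ≤ m₁, |x| ≤ M on Ω ∈ K, and m(Ω Δ P_n(Ω)) ≤ CLM_n, then the centroids satisfy ‖c(Ω) − c(P_n(Ω))‖₂ ≤ (4CLM m₁ / m₀²)·M_n for n large enough; consequently sup_{Ω∈K} d_E(c(Ω), c(P_n(Ω))) → 0 as n → ∞. -/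
/-!
The centroid is the quotient `I / a` of the first moment `I = ∫_Ω x` by the volume `a = m(Ω)`.
Passing from `Ω` to `Ω'` changes `a` by at most `m(Ω Δ Ω')` and, since `|x| ≤ M`, changes `I` by
at most `M·m(Ω Δ Ω')`; writing `I/a - J/b = (I - J)/a + (1/a - 1/b)·J` with `|J| ≤ M b` gives
`|c(Ω) - c(Ω')| ≤ 2 M m(Ω Δ Ω') / m(Ω)`, which is `O(M_n)` uniformly over the family.
-/

open MeasureTheory Filter

/-- The centroid `c(A) = (∫_A x dx)/m(A)` of a set `A ⊂ ℝ^d`. -/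
noncomputable def centroid {d : ℕ} (A : Set (EuclideanSpace ℝ (Fin d))) :
    EuclideanSpace ℝ (Fin d) :=
  (volume A).toReal⁻¹ • ∫ x in A, x

open scoped symmDiff ENNReal Topology

section

variable {E : Type*} [NormedAddCommGroup E] [NormedSpace ℝ E]

theorem norm_inv_smul_sub_inv_smul_le {a b M ε : ℝ} {I J : E} (ha : 0 < a) (hb : 0 ≤ b)
    (hM : 0 ≤ M) (hab : |a - b| ≤ ε) (hIJ : ‖I - J‖ ≤ M * ε) (hJ : ‖J‖ ≤ M * b) :
    ‖a⁻¹ • I - b⁻¹ • J‖ ≤ 2 * M * ε / a := by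
  have hinv : |a⁻¹ - b⁻¹| * b ≤ ε / a := by
    rcases hb.eq_or_lt with rfl | hb
    · simp only [mul_zero]
      exact div_nonneg ((abs_nonneg _).trans hab) ha.le
    · have hprod : (a⁻¹ - b⁻¹) * b = -(a - b) / a := by field_simp; ring
      calc |a⁻¹ - b⁻¹| * b = |(a⁻¹ - b⁻¹) * b| := by rw [abs_mul, abs_of_pos hb]
        _ = |a - b| / a := by rw [hprod, abs_div, abs_neg, abs_of_pos ha]
        _ ≤ ε / a := by gcongr
  calc ‖a⁻¹ • I - b⁻¹ • J‖ = ‖a⁻¹ • (I - J) + (a⁻¹ - b⁻¹) • J‖ := by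
        rw [smul_sub, sub_smul]; abel_nf
    _ ≤ a⁻¹ * (M * ε) + |a⁻¹ - b⁻¹| * (M * b) := by
        refine (norm_add_le _ _).trans (add_le_add ?_ ?_)
        · rw [norm_smul, Real.norm_of_nonneg (inv_nonneg.2 ha.le)]
          gcongr
        · rw [norm_smul, Real.norm_eq_abs]
          gcongr
    _ = M * ε / a + M * (|a⁻¹ - b⁻¹| * b) := by ring
    _ ≤ M * ε / a + M * (ε / a) := by gcongr
    _ = 2 * M * ε / a := by ring

end

section

variable {X E : Type*} [MeasurableSpace X] {μ : Measure X}
  [NormedAddCommGroup E] [NormedSpace ℝ E]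

theorem norm_setIntegral_sub_setIntegral_le {f : X → E} {s t : Set X} {C : ℝ}
    (hs : MeasurableSet s) (ht : MeasurableSet t) (hs' : μ s ≠ ∞) (ht' : μ t ≠ ∞)
    (hfs : IntegrableOn f s μ) (hft : IntegrableOn f t μ) (hC : ∀ x ∈ s ∆ t, ‖f x‖ ≤ C) :
    ‖∫ x in s, f x ∂μ - ∫ x in t, f x ∂μ‖ ≤ C * μ.real (s ∆ t) := by
  have hsplit : ∫ x in s, f x ∂μ - ∫ x in t, f x ∂μ
      = ∫ x in s \ t, f x ∂μ - ∫ x in t \ s, f x ∂μ := by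
    rw [← integral_inter_add_sdiff ht hfs, ← integral_inter_add_sdiff hs hft, Set.inter_comm]
    abel
  rw [hsplit, measureReal_symmDiff_eq hs ht hs' ht', mul_add]
  refine (norm_sub_le _ _).trans (add_le_add ?_ ?_)
  · exact norm_setIntegral_le_of_norm_le_const (measure_lt_top_of_subset Set.sdiff_subset hs')
      fun x hx => hC x (Or.inl hx)
  · exact norm_setIntegral_le_of_norm_le_const (measure_lt_top_of_subset Set.sdiff_subset ht')
      fun x hx => hC x (Or.inr hx)

end

section

variable {E : Type*} [NormedAddCommGroup E] [MeasurableSpace E] [ProperSpace E]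
  {μ : Measure E} [IsFiniteMeasureOnCompacts μ] {S : Set E} {M : ℝ}

theorem measure_ne_top_of_norm_le (hSM : ∀ x ∈ S, ‖x‖ ≤ M) : μ S ≠ ∞ :=
  (Metric.isBounded_closedBall.subset fun x hx =>
    mem_closedBall_zero_iff.2 (hSM x hx) : Bornology.IsBounded S).measure_lt_top.ne

theorem integrableOn_id_of_norm_le [BorelSpace E] [SecondCountableTopology E]
    (hS : MeasurableSet S) (hSM : ∀ x ∈ S, ‖x‖ ≤ M) : IntegrableOn (fun x => x) S μ :=
  Measure.integrableOn_of_bounded (measure_ne_top_of_norm_le hSM) aestronglyMeasurable_id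
    ((ae_restrict_mem hS).mono hSM)

end

theorem dist_centroid_le {d : ℕ} {S T : Set (EuclideanSpace ℝ (Fin d))} {M : ℝ}
    (hS : MeasurableSet S) (hT : MeasurableSet T) (hM : 0 ≤ M)
    (hSM : ∀ x ∈ S, ‖x‖ ≤ M) (hTM : ∀ x ∈ T, ‖x‖ ≤ M) (hS0 : 0 < volume.real S) :
    dist (centroid S) (centroid T) ≤ 2 * M * volume.real (S ∆ T) / volume.real S := by
  have hSfin : volume S ≠ ∞ := measure_ne_top_of_norm_le hSM
  have hTfin : volume T ≠ ∞ := measure_ne_top_of_norm_le hTM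
  rw [dist_eq_norm]
  refine norm_inv_smul_sub_inv_smul_le hS0 measureReal_nonneg hM
    (abs_measureReal_sub_le_measureReal_symmDiff' hS.nullMeasurableSet hT.nullMeasurableSet
      hSfin hTfin) ?_ (norm_setIntegral_le_of_norm_le_const hTfin.lt_top hTM)
  refine norm_setIntegral_sub_setIntegral_le hS hT hSfin hTfin
    (integrableOn_id_of_norm_le hS hSM) (integrableOn_id_of_norm_le hT hTM) ?_
  rintro x (hx | hx)
  exacts [hSM x hx.1, hTM x hx.1]

theorem stmt_15_general {d : ℕ} {ι : Type*}
    (C L M m₀ m₁ : ℝ) (hM : 0 < M)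
    (hm₀ : 0 < m₀)
    (Ω : ι → Set (EuclideanSpace ℝ (Fin d)))
    (A : ℕ → ι → Set (EuclideanSpace ℝ (Fin d))) (Mn : ℕ → ℝ)
    (hΩm : ∀ i, MeasurableSet (Ω i)) (hAm : ∀ n i, MeasurableSet (A n i))
    (hlow : ∀ i, m₀ ≤ (volume (Ω i)).toReal)
    (hup : ∀ i, (volume (Ω i)).toReal ≤ m₁)
    (hbound : ∀ n i, ∀ x ∈ Ω i ∪ A n i, ‖x‖ ≤ M)
    (hsym : ∀ n i, (volume ((Ω i \ A n i) ∪ (A n i \ Ω i))).toReal ≤ C * L * Mn n)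
    (hMn0 : Tendsto Mn atTop (nhds 0)) :
    (∀ n i, C * L * Mn n ≤ m₀ / 2 →
      dist (centroid (Ω i)) (centroid (A n i)) ≤ (4 * C * L * M * m₁ / m₀ ^ 2) * Mn n) ∧
    (∀ ε > (0 : ℝ), ∃ N : ℕ, ∀ n ≥ N, ∀ i,
      dist (centroid (Ω i)) (centroid (A n i)) < ε) := by
  have hdist : ∀ n i, dist (centroid (Ω i)) (centroid (A n i))
      ≤ (4 * C * L * M * m₁ / m₀ ^ 2) * Mn n := by
    intro n i
    have hsym' : volume.real (Ω i ∆ A n i) ≤ C * L * Mn n := hsym n i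
    have hm₀₁ : m₀ ≤ m₁ := (hlow i).trans (hup i)
    have hCLMn : 0 ≤ C * L * Mn n := measureReal_nonneg.trans hsym'
    calc dist (centroid (Ω i)) (centroid (A n i))
        ≤ 2 * M * volume.real (Ω i ∆ A n i) / volume.real (Ω i) :=
          dist_centroid_le (hΩm i) (hAm n i) hM.le (fun x hx => hbound n i x (Or.inl hx))
            (fun x hx => hbound n i x (Or.inr hx)) (hm₀.trans_le (hlow i))
      _ ≤ 2 * M * (C * L * Mn n) / m₀ := by gcongr; exact hlow i
      _ ≤ 2 * M * (C * L * Mn n) / m₀ * (2 * m₁ / m₀) :=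
          le_mul_of_one_le_right (by positivity) ((one_le_div hm₀).2 (by linarith))
      _ = (4 * C * L * M * m₁ / m₀ ^ 2) * Mn n := by ring
  refine ⟨fun n i _ => hdist n i, fun ε hε => ?_⟩
  have hlim : Tendsto (fun n => (4 * C * L * M * m₁ / m₀ ^ 2) * Mn n) atTop (𝓝 0) := by
    simpa using hMn0.const_mul (4 * C * L * M * m₁ / m₀ ^ 2)
  obtain ⟨N, hN⟩ := eventually_atTop.1 (hlim.eventually (eventually_lt_nhds hε))
  exact ⟨N, fun n hn i => (hdist n i).trans_lt (hN n hn)⟩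

/-- Centroid stability under the symmetric-difference estimate
(Appendix D). For a family of domains `Ω i` with `m₀ ≤ m(Ω i) ≤ m₁`, all points of
`Ω i ∪ A n i` of norm `≤ M`, and `m(Ω i Δ A n i) ≤ C·L·M_n` with `M_n → 0`: for
`n` large enough (namely once `C·L·M_n ≤ m₀/2`) the centroids satisfy
`‖c(Ω i) − c(A n i)‖ ≤ (4·C·L·M·m₁/m₀²)·M_n`; consequently
`sup_i d_E(c(Ω i), c(A n i)) → 0` as `n → ∞`. -/
theorem stmt_15 {d : ℕ} {ι : Type*}
    (C L M m₀ m₁ : ℝ) (hC : 0 < C) (hL : 0 < L) (hM : 0 < M)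
    (hm₀ : 0 < m₀) (hm₁ : 0 < m₁)
    (Ω : ι → Set (EuclideanSpace ℝ (Fin d)))
    (A : ℕ → ι → Set (EuclideanSpace ℝ (Fin d))) (Mn : ℕ → ℝ)
    (hΩm : ∀ i, MeasurableSet (Ω i)) (hAm : ∀ n i, MeasurableSet (A n i))
    (hlow : ∀ i, m₀ ≤ (volume (Ω i)).toReal)
    (hup : ∀ i, (volume (Ω i)).toReal ≤ m₁)
    (hAup : ∀ n i, (volume (A n i)).toReal ≤ m₁)
    (hbound : ∀ n i, ∀ x ∈ Ω i ∪ A n i, ‖x‖ ≤ M)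
    (hsym : ∀ n i, (volume ((Ω i \ A n i) ∪ (A n i \ Ω i))).toReal ≤ C * L * Mn n)
    (hMn : ∀ n, 0 ≤ Mn n)
    (hMn0 : Tendsto Mn atTop (nhds 0)) :
    (∀ n i, C * L * Mn n ≤ m₀ / 2 →
      dist (centroid (Ω i)) (centroid (A n i)) ≤ (4 * C * L * M * m₁ / m₀ ^ 2) * Mn n) ∧
    (∀ ε > (0 : ℝ), ∃ N : ℕ, ∀ n ≥ N, ∀ i,
      dist (centroid (Ω i)) (centroid (A n i)) < ε) :=
  stmt_15_general C L M m₀ m₁ hM hm₀ Ω A Mn hΩm hAm hlow hup hbound hsym hMn0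
end
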